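/- arXiv:1508.04850 — 2 statements merged into one kernel-verified Lean document; each statement's English description precedes it below -/
import Mathlib

section
/- If R is a bisimulation up to ≈b from T1 to T2, then the relational composition ≈b ∘ R is a branching bisimulation from T1 to T2. -/
set_option autoImplicit false

universe u v w x

/-! ### Labelled transition systems.
`A` is the set of observable actions; labels are `Option A`, with `none` playing
the role of the unobservable action τ. -/

structure LTS (A : Type u) where
  /-- the set of states -/
  S : Type v
  /-- the labelled transition relation; `step s a t` means s →a t (with `a = none` for τ) -/
  step : S → Option A → S → Prop
  /-- the initial state ↑ -/
  init : S

namespace LTS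

variable {A : Type u}

/-- a τ-step -/
def TauStep (T : LTS.{u, v} A) (s t : T.S) : Prop := T.step s none t

/-- `→*` : the reflexive-transitive closure of →τ -/
def TauStar (T : LTS.{u, v} A) : T.S → T.S → Prop := Relation.ReflTransGen T.TauStep

/-- `→+` : the transitive closure of →τ -/
def TauPlus (T : LTS.{u, v} A) : T.S → T.S → Prop := Relation.TransGen T.TauStep

/-- `s →(a) t` : either `s →a t`, or `a = τ` and `s = t` -/
def OptStep (T : LTS.{u, v} A) (s : T.S) (a : Option A) (t : T.S) : Prop :=
  T.step s a t ∨ (a = none ∧ s = t)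

/-- reachability from the initial state -/
def Reachable (T : LTS.{u, v} A) (s : T.S) : Prop :=
  Relation.ReflTransGen (fun p q => ∃ a, T.step p a q) T.init s

/-- `T` is boundedly branching: there is `B : ℕ` with `|out(s)| ≤ B` for every state `s`,
where `out(s) = {(a,t) | s →a t}`. -/
def BoundedBranching (T : LTS.{u, v} A) : Prop :=
  ∃ B : ℕ, ∀ s : T.S, Cardinal.mk {p : Option A × T.S // T.step s p.1 p.2} ≤ (B : Cardinal)

end LTS

/-- `R` is a branching bisimulation from `T1` to `T2`. -/
def IsBranchingBisim {A : Type u} (T1 : LTS.{u, v} A) (T2 : LTS.{u, w} A)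
    (R : T1.S → T2.S → Prop) : Prop :=
  ∀ s1 s2, R s1 s2 →
    (∀ a s1', T1.step s1 a s1' →
      ∃ s2'' s2', T2.TauStar s2 s2'' ∧ T2.OptStep s2'' a s2' ∧ R s1 s2'' ∧ R s1' s2') ∧
    (∀ a s2', T2.step s2 a s2' →
      ∃ s1'' s1', T1.TauStar s1 s1'' ∧ T1.OptStep s1'' a s1' ∧ R s1'' s2 ∧ R s1' s2')

/-- `R` is divergence-preserving. -/
def IsDivPres {A : Type u} (T1 : LTS.{u, v} A) (T2 : LTS.{u, w} A)
    (R : T1.S → T2.S → Prop) : Prop :=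
  (∀ (f : ℕ → T1.S) (s2 : T2.S),
      (∀ i, T1.TauStep (f i) (f (i + 1))) → (∀ i, R (f i) s2) →
      ∃ s2', T2.TauPlus s2 s2' ∧ ∃ i, R (f i) s2') ∧
  (∀ (s1 : T1.S) (g : ℕ → T2.S),
      (∀ i, T2.TauStep (g i) (g (i + 1))) → (∀ i, R s1 (g i)) →
      ∃ s1', T1.TauPlus s1 s1' ∧ ∃ i, R s1' (g i))

/-- `T1 ≈b T2` -/
def BranchingBisimilar {A : Type u} (T1 : LTS.{u, v} A) (T2 : LTS.{u, w} A) : Prop :=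
  ∃ R, IsBranchingBisim T1 T2 R ∧ R T1.init T2.init

/-- `T1 ≈Δ T2` -/
def BranchingBisimilarD {A : Type u} (T1 : LTS.{u, v} A) (T2 : LTS.{u, w} A) : Prop :=
  ∃ R, IsBranchingBisim T1 T2 R ∧ IsDivPres T1 T2 R ∧ R T1.init T2.init

/-- `s1 ≈b s2` for states -/
def SBisim {A : Type u} (T1 : LTS.{u, v} A) (T2 : LTS.{u, w} A) (s1 : T1.S) (s2 : T2.S) : Prop :=
  ∃ R, IsBranchingBisim T1 T2 R ∧ R s1 s2

/-- `s1 ≈Δ s2` for states -/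
def SBisimD {A : Type u} (T1 : LTS.{u, v} A) (T2 : LTS.{u, w} A) (s1 : T1.S) (s2 : T2.S) : Prop :=
  ∃ R, IsBranchingBisim T1 T2 R ∧ IsDivPres T1 T2 R ∧ R s1 s2

/-- `R` is a bisimulation up to ≈b from `T1` to `T2`. -/
def IsBisimUpTo {A : Type u} (T1 : LTS.{u, v} A) (T2 : LTS.{u, w} A)
    (R : T1.S → T2.S → Prop) : Prop :=
  ∀ s1 s2, R s1 s2 →
    (∀ a s1'' s1', T1.TauStar s1 s1'' → T1.step s1'' a s1' →
        SBisim T1 T1 s1 s1'' → (a ≠ none ∨ ¬ SBisim T1 T1 s1'' s1') →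
        ∃ s2', T2.step s2 a s2' ∧
          (∃ u, SBisim T1 T1 s1'' u ∧ R u s2) ∧
          (∃ u, SBisim T1 T1 s1' u ∧ R u s2')) ∧
    (∀ a s2', T2.step s2 a s2' →
        ∃ s1'' s1', T1.TauStar s1 s1'' ∧ T1.step s1'' a s1' ∧ SBisim T1 T1 s1'' s1 ∧
          (∃ u, SBisim T1 T1 s1' u ∧ R u s2'))

/-- the ≈Δ-equivalence class of a state -/
def eqClassD {A : Type u} (T : LTS.{u, v} A) (s : T.S) : Set T.S := {t | SBisimD T T s t}

/-- the branching degree of a state up to ≈Δ :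
the cardinality of `{ (a, [s']_{≈Δ}) | ∃ s''. s →* s'' →a s', s ≈Δ s'', (a = τ ⇒ s'' ≉Δ s') }`. -/
def degD {A : Type u} (T : LTS.{u, v} A) (s : T.S) : Cardinal :=
  Cardinal.mk {p : Option A × Set T.S //
    ∃ s'' s', T.TauStar s s'' ∧ T.step s'' p.1 s' ∧ SBisimD T T s s'' ∧
      (p.1 = none → ¬ SBisimD T T s'' s') ∧ p.2 = eqClassD T s'}

/-- `T` has a divergence up to ≈Δ : an infinite τ-sequence of reachable,
mutually ≈Δ-equivalent states. -/
def HasDivergenceD {A : Type u} (T : LTS.{u, v} A) : Prop :=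
  ∃ f : ℕ → T.S, (∀ i, T.Reachable (f i)) ∧ (∀ i, T.TauStep (f i) (f (i + 1))) ∧
    ∀ i j, SBisimD T T (f i) (f j)

/-- `T` is boundedly branching up to ≈Δ (over the reachable states). -/
def BoundedBranchingUpToD {A : Type u} (T : LTS.{u, v} A) : Prop :=
  ∃ B : ℕ, ∀ s, T.Reachable s → degD T s ≤ (B : Cardinal)

/-! ### (Generalized) reactive Turing machines.
Tape symbols are `Option D` with `none` the blank `□`; actions are `Option A` with
`none` the unobservable action τ.  A configuration `(s, (l, d, r))` consists of the
control state `s`, the (reversed) tape content `l` to the left of the head, the symbol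
`d` under the head, and the tape content `r` to the right of the head; this represents
the tape instance δL ď δR with δL = reverse of l and δR = r.  The boolean in a rule
is the move direction: `false` = L, `true` = R. -/

/-- generalized reactive Turing machines: possibly infinitely many control states,
tape symbols and transition rules. -/
structure GRTM (A : Type u) where
  /-- control states -/
  Q : Type
  /-- data symbols (the tape alphabet is `Option D`, `none` being the blank □) -/
  D : Type
  /-- transition rules `(s, d, a, e, mv, t)`, i.e. s →a[d/e]mv t -/
  rules : Set (Q × Option D × Option A × Option D × Bool × Q)
  /-- the initial control state -/
  init : Q

namespace GRTM

variable {A : Type u}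

/-- configurations -/
abbrev Conf (M : GRTM A) : Type :=
  M.Q × List (Option M.D) × Option M.D × List (Option M.D)

/-- the transition system `T(M)` associated with `M` -/
def lts (M : GRTM A) : LTS.{u, 0} A where
  S := M.Conf
  init := (M.init, [], none, [])
  step := fun c a c' => ∃ e t,
    ((c.1, c.2.2.1, a, e, false, t) ∈ M.rules ∧
      c' = (t, c.2.1.tail, c.2.1.headD none, e :: c.2.2.2)) ∨
    ((c.1, c.2.2.1, a, e, true, t) ∈ M.rules ∧
      c' = (t, e :: c.2.1, c.2.2.2.headD none, c.2.2.2.tail))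

end GRTM

/-- reactive Turing machines: finitely many control states, data symbols and rules. -/
structure RTM (A : Type u) where
  /-- control states -/
  Q : Type
  /-- data symbols -/
  D : Type
  finQ : Finite Q
  finD : Finite D
  /-- transition rules `(s, d, a, e, mv, t)`, i.e. s →a[d/e]mv t -/
  rules : Set (Q × Option D × Option A × Option D × Bool × Q)
  finRules : rules.Finite
  /-- the initial control state -/
  init : Q

namespace RTM

variable {A : Type u}

/-- configurations -/
abbrev Conf (M : RTM A) : Type :=
  M.Q × List (Option M.D) × Option M.D × List (Option M.D)

/-- the transition system `T(M)` associated with `M` -/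
def lts (M : RTM A) : LTS.{u, 0} A where
  S := M.Conf
  init := (M.init, [], none, [])
  step := fun c a c' => ∃ e t,
    ((c.1, c.2.2.1, a, e, false, t) ∈ M.rules ∧
      c' = (t, c.2.1.tail, c.2.1.headD none, e :: c.2.2.2)) ∨
    ((c.1, c.2.2.1, a, e, true, t) ∈ M.rules ∧
      c' = (t, e :: c.2.1, c.2.2.2.headD none, c.2.2.2.tail))

end RTM

/-! ### STATEMENT 3: if `R` is a bisimulation up to ≈b, then ≈b ∘ R is a branching
bisimulation -/

section AuxUpTo

variable {A : Type u}

lemma tauStar_of_optStep' {T : LTS.{u, v} A} {s s' t : T.S}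
    (h1 : T.TauStar s s') (h2 : T.OptStep s' none t) : T.TauStar s t := by
  rcases h2 with h | ⟨_, rfl⟩
  · exact h1.tail h
  · exact h1

lemma bisim_tauStar' {T1 : LTS.{u, v} A} {T2 : LTS.{u, w} A} {R : T1.S → T2.S → Prop}
    (hR : IsBranchingBisim T1 T2 R) {s s' : T1.S} {t : T2.S}
    (hs : T1.TauStar s s') (hst : R s t) :
    ∃ t', T2.TauStar t t' ∧ R s' t' := by
  induction hs with
  | refl => exact ⟨t, Relation.ReflTransGen.refl, hst⟩
  | tail hpath hstep ih =>
    obtain ⟨t', ht', hr⟩ := ih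
    obtain ⟨t'', t3, h1, h2, _, h4⟩ := (hR _ _ hr).1 none _ hstep
    exact ⟨t3, tauStar_of_optStep' (ht'.trans h1) h2, h4⟩

lemma bisim_inv' {T1 : LTS.{u, v} A} {T2 : LTS.{u, w} A} {R : T1.S → T2.S → Prop}
    (hR : IsBranchingBisim T1 T2 R) :
    IsBranchingBisim T2 T1 (fun t s => R s t) := by
  intro t s hr
  exact ⟨(hR s t hr).2, (hR s t hr).1⟩

lemma bisim_comp' {T1 : LTS.{u, v} A} {T2 : LTS.{u, w} A} {T3 : LTS.{u, x} A}
    {R : T1.S → T2.S → Prop} {R' : T2.S → T3.S → Prop}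
    (h1 : IsBranchingBisim T1 T2 R) (h2 : IsBranchingBisim T2 T3 R') :
    IsBranchingBisim T1 T3 (fun s v => ∃ t, R s t ∧ R' t v) := by
  rintro s v ⟨t, hst, htv⟩
  constructor
  · intro a s' hstep
    obtain ⟨t'', t', htt'', hopt, hrt'', hrt'⟩ := (h1 s t hst).1 a s' hstep
    obtain ⟨v'', hv'', hrv''⟩ := bisim_tauStar' h2 htt'' htv
    rcases hopt with hstep' | ⟨ha, heq⟩
    · obtain ⟨w'', w', hw, hoptw, hr1, hr2⟩ := (h2 _ _ hrv'').1 a t' hstep'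
      exact ⟨w'', w', hv''.trans hw, hoptw, ⟨t'', hrt'', hr1⟩, ⟨t', hrt', hr2⟩⟩
    · subst ha; subst heq
      exact ⟨v'', v'', hv'', Or.inr ⟨rfl, rfl⟩, ⟨t'', hrt'', hrv''⟩, ⟨t'', hrt', hrv''⟩⟩
  · intro a v' hstep
    obtain ⟨t'', t', htt'', hopt, hrt'', hrt'⟩ := (h2 t v htv).2 a v' hstep
    obtain ⟨s'', hs'', hrs''⟩ := bisim_tauStar' (bisim_inv' h1) htt'' hst
    rcases hopt with hstep' | ⟨ha, heq⟩
    · obtain ⟨s3, s4, hs3, hopts, hr1, hr2⟩ := (h1 _ _ hrs'').2 a t' hstep'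
      exact ⟨s3, s4, hs''.trans hs3, hopts, ⟨t'', hr1, hrt''⟩, ⟨t', hr2, hrt'⟩⟩
    · subst ha; subst heq
      exact ⟨s'', s'', hs'', Or.inr ⟨rfl, rfl⟩, ⟨t'', hrs'', hrt''⟩, ⟨t'', hrs'', hrt'⟩⟩

lemma sbisim_refl' {T : LTS.{u, v} A} (s : T.S) : SBisim T T s s := by
  refine ⟨Eq, ?_, rfl⟩
  rintro s1 s2 rfl
  constructor
  · intro a s' h
    exact ⟨s1, s', Relation.ReflTransGen.refl, Or.inl h, rfl, rfl⟩
  · intro a s' h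
    exact ⟨s1, s', Relation.ReflTransGen.refl, Or.inl h, rfl, rfl⟩

lemma sbisim_symm' {T : LTS.{u, v} A} {s t : T.S} (h : SBisim T T s t) : SBisim T T t s := by
  obtain ⟨R, hR, hr⟩ := h
  exact ⟨fun a b => R b a, bisim_inv' hR, hr⟩

lemma sbisim_trans' {T : LTS.{u, v} A} {s t v : T.S}
    (h1 : SBisim T T s t) (h2 : SBisim T T t v) : SBisim T T s v := by
  obtain ⟨R, hR, hr⟩ := h1
  obtain ⟨R', hR', hr'⟩ := h2
  exact ⟨fun a b => ∃ c, R a c ∧ R' c b, bisim_comp' hR hR', t, hr, hr'⟩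

lemma sbisim_isBisim' (T1 : LTS.{u, v} A) (T2 : LTS.{u, w} A) :
    IsBranchingBisim T1 T2 (SBisim T1 T2) := by
  rintro s t ⟨R, hR, hr⟩
  constructor
  · intro a s' h
    obtain ⟨t'', t', h1, h2, h3, h4⟩ := (hR s t hr).1 a s' h
    exact ⟨t'', t', h1, h2, ⟨R, hR, h3⟩, ⟨R, hR, h4⟩⟩
  · intro a t' h
    obtain ⟨s'', s', h1, h2, h3, h4⟩ := (hR s t hr).2 a t' h
    exact ⟨s'', s', h1, h2, ⟨R, hR, h3⟩, ⟨R, hR, h4⟩⟩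

end AuxUpTo

theorem bisimUpTo_comp_isBranchingBisim {A : Type u} (T1 : LTS.{u, v} A) (T2 : LTS.{u, w} A)
    (R : T1.S → T2.S → Prop) (hR : IsBisimUpTo T1 T2 R) :
    IsBranchingBisim T1 T2 (fun s t => ∃ u, SBisim T1 T1 s u ∧ R u t) := by
  have hB : IsBranchingBisim T1 T1 (SBisim T1 T1) := sbisim_isBisim' T1 T1
  rintro s1 s2 ⟨u, hsu, hus2⟩
  constructor
  · intro a s1' hstep
    obtain ⟨u'', u', huu'', hopt, h1, h2⟩ := (hB s1 u hsu).1 a s1' hstep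
    -- h1 : s1 ≈ u'', h2 : s1' ≈ u'
    by_cases hc : a = none ∧ SBisim T1 T1 u'' u'
    · -- stutter case: match without moving
      refine ⟨s2, s2, Relation.ReflTransGen.refl, Or.inr ⟨hc.1, rfl⟩,
        ⟨u, hsu, hus2⟩, ⟨u, ?_, hus2⟩⟩
      -- s1' ≈ u' ≈ u'' ≈ s1 ≈ u
      exact sbisim_trans' h2 (sbisim_trans' (sbisim_symm' hc.2)
        (sbisim_trans' (sbisim_symm' h1) hsu))
    · rcases hopt with hstep' | ⟨ha, heq⟩
      · have huu''' : SBisim T1 T1 u u'' := sbisim_trans' (sbisim_symm' hsu) h1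
        have hside : a ≠ none ∨ ¬ SBisim T1 T1 u'' u' := by
          by_cases ha : a = none
          · exact Or.inr (fun hbb => hc ⟨ha, hbb⟩)
          · exact Or.inl ha
        obtain ⟨s2', hstep2, ⟨v, hv1, hv2⟩, ⟨w, hw1, hw2⟩⟩ :=
          (hR u s2 hus2).1 a u'' u' huu'' hstep' huu''' hside
        exact ⟨s2, s2', Relation.ReflTransGen.refl, Or.inl hstep2,
          ⟨v, sbisim_trans' h1 hv1, hv2⟩, ⟨w, sbisim_trans' h2 hw1, hw2⟩⟩
      · subst ha; subst heq
        exact absurd ⟨rfl, sbisim_refl' u''⟩ hc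
  · intro a s2' hstep
    obtain ⟨u'', u', htau, hstepu, h1, ⟨w, hw1, hw2⟩⟩ := (hR u s2 hus2).2 a s2' hstep
    -- h1 : u'' ≈ u
    obtain ⟨s'', hs'', hrs''⟩ := bisim_tauStar' hB htau (sbisim_symm' hsu)
    -- hrs'' : u'' ≈ s''
    obtain ⟨s3, s4, hs3, hopts, hq1, hq2⟩ := (hB u'' s'' hrs'').1 a u' hstepu
    -- hq1 : u'' ≈ s3, hq2 : u' ≈ s4
    refine ⟨s3, s4, hs''.trans hs3, hopts,
      ⟨u, sbisim_trans' (sbisim_symm' hq1) h1, hus2⟩,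
      ⟨w, sbisim_trans' (sbisim_symm' hq2) hw1, hw2⟩⟩
end

section
/- If an A_τ-labelled transition system T is boundedly branching and has no divergence up to ≈Δ, then T is boundedly branching up to ≈Δ. -/
set_option autoImplicit false

universe u v w x

/-!
Since `T` has no divergence up to `≈Δ`, every reachable state `s` is `≈Δ`-equivalent to a
state `t` without inert τ-steps, i.e. τ-steps to an equivalent state. A transition counted in
`deg(s)` leaves the class of `s` from some `s'' ≈Δ s`; matching it from `t`, the idle τ-prefix
must be empty (by stuttering it would consist of inert steps), so it is matched by a transition
of `t` itself. Hence `deg(s) ≤ |out(t)| ≤ B`.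

The technical core is that `≈Δ` is an equivalence. For the divergence clause of the composite
`≈Δ ∘ ≈Δ` one builds an infinite τ-run in the middle system that stays in the class of the
target state, to which divergence preservation of `≈Δ` then applies.
-/

section Seq

variable {α : Type*} {r : α → α → Prop}

theorem exists_seq_of_forall_exists {p : α → Prop} (h : ∀ x, p x → ∃ y, p y ∧ r x y)
    {x₀ : α} (hx₀ : p x₀) :
    ∃ g : ℕ → α, g 0 = x₀ ∧ ∀ n, p (g n) ∧ r (g n) (g (n + 1)) := by
  choose! next hp hr using h
  have hpg : ∀ n, p (next^[n] x₀) := by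
    intro n
    induction n with
    | zero => exact hx₀
    | succ n ih => rw [Function.iterate_succ_apply']; exact hp _ ih
  refine ⟨fun n => next^[n] x₀, rfl, fun n => ⟨hpg n, ?_⟩⟩
  show r (next^[n] x₀) (next^[n + 1] x₀)
  rw [Function.iterate_succ_apply']
  exact hr _ (hpg n)

theorem exists_seq_reflTransGen_of_forall_transGen {M : α → Prop}
    (h : ∀ x, M x → ∃ y, Relation.TransGen r x y ∧ M y) {x₀ : α} (hx₀ : M x₀) :
    ∃ g : ℕ → α, g 0 = x₀ ∧
      ∀ n, r (g n) (g (n + 1)) ∧ ∃ y, Relation.ReflTransGen r (g n) y ∧ M y := by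
  have step : ∀ x, (∃ y, Relation.ReflTransGen r x y ∧ M y) →
      ∃ x', (∃ y, Relation.ReflTransGen r x' y ∧ M y) ∧ r x x' := by
    rintro x ⟨y, hxy, hy⟩
    rcases hxy.cases_head with rfl | ⟨x', hxx', hx'y⟩
    · obtain ⟨y', hxy', hy'⟩ := h x hy
      obtain ⟨x', hxx', hx'y'⟩ := Relation.TransGen.head'_iff.mp hxy'
      exact ⟨x', ⟨y', hx'y', hy'⟩, hxx'⟩
    · exact ⟨x', ⟨y, hx'y, hy⟩, hxx'⟩
  obtain ⟨g, hg0, hg⟩ := exists_seq_of_forall_exists step ⟨x₀, .refl, hx₀⟩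
  exact ⟨g, hg0, fun n => ⟨(hg n).2, (hg n).1⟩⟩

end Seq

section Bisim

variable {A : Type u} {T : LTS.{u, v} A} {T1 : LTS.{u, v} A} {T2 : LTS.{u, w} A}
  {T3 : LTS.{u, x} A}

theorem LTS.tauStar_of_optStep_none {s t : T.S} (h : T.OptStep s none t) : T.TauStar s t := by
  rcases h with h | ⟨-, rfl⟩
  · exact .single h
  · exact .refl

theorem IsBranchingBisim.flip {R : T1.S → T2.S → Prop} (hR : IsBranchingBisim T1 T2 R) :
    IsBranchingBisim T2 T1 (flip R) :=
  fun s2 s1 h => ⟨(hR s1 s2 h).2, (hR s1 s2 h).1⟩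

theorem IsDivPres.flip {R : T1.S → T2.S → Prop} (hD : IsDivPres T1 T2 R) :
    IsDivPres T2 T1 (flip R) :=
  ⟨fun g s1 hg h => hD.2 s1 g hg h, fun s2 f hf h => hD.1 f s2 hf h⟩

namespace IsBranchingBisim

variable {R : T1.S → T2.S → Prop}

theorem tauStep_or (hR : IsBranchingBisim T1 T2 R) {s s' : T1.S} {t : T2.S} (hst : R s t)
    (hs : T1.TauStep s s') :
    R s' t ∨ ∃ t', T2.TauPlus t t' ∧ R s' t' := by
  obtain ⟨t'', t', htt'', ht''t', -, hs't'⟩ := (hR s t hst).1 none s' hs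
  rcases Relation.reflTransGen_iff_eq_or_transGen.mp
      (htt''.trans (LTS.tauStar_of_optStep_none ht''t')) with rfl | htt'
  · exact .inl hs't'
  · exact .inr ⟨t', htt', hs't'⟩

theorem exists_tauStar (hR : IsBranchingBisim T1 T2 R) {s s' : T1.S} {t : T2.S} (hst : R s t)
    (hs : T1.TauStar s s') :
    ∃ t', T2.TauStar t t' ∧ R s' t' := by
  induction hs with
  | refl => exact ⟨t, .refl, hst⟩
  | tail _ hstep ih =>
    obtain ⟨t₁, htt₁, ht₁⟩ := ih
    rcases hR.tauStep_or ht₁ hstep with h | ⟨t', ht₁t', h⟩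
    · exact ⟨t₁, htt₁, h⟩
    · exact ⟨t', htt₁.trans ht₁t'.to_reflTransGen, h⟩

theorem transGen_or (hR : IsBranchingBisim T1 T2 R) {s s' : T1.S} {t : T2.S} (hst : R s t)
    (hs : T1.TauPlus s s') :
    Relation.TransGen (fun p q => T1.TauStep p q ∧ R q t) s s' ∨
      ∃ t', T2.TauPlus t t' ∧ R s' t' := by
  induction hs with
  | single hstep => exact (hR.tauStep_or hst hstep).imp_left fun h => .single ⟨hstep, h⟩
  | tail _ hstep ih =>
    rcases ih with hin | ⟨t₁, htt₁, ht₁⟩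
    · obtain ⟨_, -, -, hbt⟩ := Relation.TransGen.tail'_iff.mp hin
      exact (hR.tauStep_or hbt hstep).imp_left fun h => hin.tail ⟨hstep, h⟩
    · rcases hR.tauStep_or ht₁ hstep with h | ⟨t', ht₁t', h⟩
      · exact .inr ⟨t₁, htt₁, h⟩
      · exact .inr ⟨t', htt₁.trans ht₁t', h⟩

theorem exists_tauPlus_of_run (hR : IsBranchingBisim T1 T2 R) (hD : IsDivPres T1 T2 R)
    {f : ℕ → T1.S} {t : T2.S} (hf : ∀ i, T1.TauStep (f i) (f (i + 1))) (h0 : R (f 0) t) :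
    ∃ t', T2.TauPlus t t' ∧ ∃ i, R (f i) t' := by
  have stay_or_leave : ∀ n, R (f n) t ∨ ∃ t', T2.TauPlus t t' ∧ ∃ i, R (f i) t' := by
    intro n
    induction n with
    | zero => exact .inl h0
    | succ n ih =>
      refine ih.elim (fun h => ?_) .inr
      exact (hR.tauStep_or h (hf n)).imp_right fun ⟨t', htt', h'⟩ => ⟨t', htt', n + 1, h'⟩
  by_contra hstay
  exact hstay (hD.1 f t hf fun n => (stay_or_leave n).resolve_right hstay)

end IsBranchingBisim

theorem isBranchingBisim_sBisimD : IsBranchingBisim T1 T2 (SBisimD T1 T2) := by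
  rintro s1 s2 ⟨R, hR, hD, h⟩
  refine ⟨fun a s1' hs => ?_, fun a s2' hs => ?_⟩
  · obtain ⟨s2'', s2', h1, h2, h3, h4⟩ := (hR s1 s2 h).1 a s1' hs
    exact ⟨s2'', s2', h1, h2, ⟨R, hR, hD, h3⟩, ⟨R, hR, hD, h4⟩⟩
  · obtain ⟨s1'', s1', h1, h2, h3, h4⟩ := (hR s1 s2 h).2 a s2' hs
    exact ⟨s1'', s1', h1, h2, ⟨R, hR, hD, h3⟩, ⟨R, hR, hD, h4⟩⟩

theorem isDivPres_sBisimD : IsDivPres T1 T2 (SBisimD T1 T2) := by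
  refine ⟨fun f s2 hf h => ?_, fun s1 g hg h => ?_⟩
  · obtain ⟨R, hR, hD, h0⟩ := h 0
    obtain ⟨s2', hs2', i, hi⟩ := hR.exists_tauPlus_of_run hD hf h0
    exact ⟨s2', hs2', i, R, hR, hD, hi⟩
  · obtain ⟨R, hR, hD, h0⟩ := h 0
    obtain ⟨s1', hs1', i, hi⟩ := hR.flip.exists_tauPlus_of_run hD.flip hg h0
    exact ⟨s1', hs1', i, R, hR, hD, hi⟩

theorem SBisimD.refl (s : T.S) : SBisimD T T s s := by
  refine ⟨Eq, ?_, ⟨fun f s hf h => ?_, fun s g hg h => ?_⟩, rfl⟩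
  · rintro s _ rfl
    exact ⟨fun a s' hs => ⟨s, s', .refl, .inl hs, rfl, rfl⟩,
      fun a s' hs => ⟨s, s', .refl, .inl hs, rfl, rfl⟩⟩
  · exact ⟨f 1, .single (h 0 ▸ hf 0), 1, rfl⟩
  · exact ⟨g 1, .single (h 0 ▸ hg 0), 1, rfl⟩

theorem SBisimD.symm {s1 : T1.S} {s2 : T2.S} (h : SBisimD T1 T2 s1 s2) : SBisimD T2 T1 s2 s1 :=
  let ⟨R, hR, hD, h⟩ := h
  ⟨flip R, hR.flip, hD.flip, h⟩

theorem Relation.Comp.sBisimD_symm {s1 : T1.S} {s3 : T3.S}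
    (h : Relation.Comp (SBisimD T1 T2) (SBisimD T2 T3) s1 s3) :
    Relation.Comp (SBisimD T3 T2) (SBisimD T2 T1) s3 s1 :=
  let ⟨s2, h12, h23⟩ := h
  ⟨s2, h23.symm, h12.symm⟩

theorem sBisimD_comp_forth {s1 s1' : T1.S} {s2 : T2.S} {s3 : T3.S} {a : Option A}
    (h12 : SBisimD T1 T2 s1 s2) (h23 : SBisimD T2 T3 s2 s3) (hs : T1.step s1 a s1') :
    ∃ s3'' s3', T3.TauStar s3 s3'' ∧ T3.OptStep s3'' a s3' ∧
      Relation.Comp (SBisimD T1 T2) (SBisimD T2 T3) s1 s3'' ∧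
      Relation.Comp (SBisimD T1 T2) (SBisimD T2 T3) s1' s3' := by
  obtain ⟨m'', m', hm, hm'', h1m'', h1'm'⟩ := (isBranchingBisim_sBisimD s1 s2 h12).1 a s1' hs
  obtain ⟨w, hw, hm''w⟩ := isBranchingBisim_sBisimD.exists_tauStar h23 hm
  rcases hm'' with hstep | ⟨rfl, rfl⟩
  · obtain ⟨w'', w', h1, h2, h3, h4⟩ := (isBranchingBisim_sBisimD m'' w hm''w).1 a m' hstep
    exact ⟨w'', w', hw.trans h1, h2, ⟨m'', h1m'', h3⟩, ⟨m', h1'm', h4⟩⟩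
  · exact ⟨w, w, hw, .inr ⟨rfl, rfl⟩, ⟨m'', h1m'', hm''w⟩, ⟨m'', h1'm', hm''w⟩⟩

theorem sBisimD_comp_divPres {f : ℕ → T1.S} {s3 : T3.S}
    (hf : ∀ i, T1.TauStep (f i) (f (i + 1)))
    (h : ∀ i, Relation.Comp (SBisimD T1 T2) (SBisimD T2 T3) (f i) s3) :
    ∃ s3', T3.TauPlus s3 s3' ∧
      ∃ i, Relation.Comp (SBisimD T1 T2) (SBisimD T2 T3) (f i) s3' := by
  by_contra hstuck
  set r : T2.S → T2.S → Prop := fun p q => T2.TauStep p q ∧ SBisimD T2 T3 q s3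
  set M : T2.S → Prop := fun m => SBisimD T2 T3 m s3 ∧ ∃ i, SBisimD T1 T2 (f i) m
  have progress : ∀ m, M m → ∃ m', Relation.TransGen r m m' ∧ M m' := by
    rintro m ⟨hm, i, him⟩
    obtain ⟨m', hmm', k, hkm'⟩ := isBranchingBisim_sBisimD.exists_tauPlus_of_run
      isDivPres_sBisimD (f := fun k => f (i + k)) (fun k => hf (i + k)) him
    rcases isBranchingBisim_sBisimD.transGen_or hm hmm' with hr | ⟨z, hz, hm'z⟩
    · obtain ⟨_, -, -, hm'⟩ := Relation.TransGen.tail'_iff.mp hr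
      exact ⟨m', hr, hm', i + k, hkm'⟩
    · exact absurd ⟨z, hz, i + k, m', hkm', hm'z⟩ hstuck
  obtain ⟨m₀, h0m₀, hm₀⟩ := h 0
  obtain ⟨g, rfl, hg⟩ :=
    exists_seq_reflTransGen_of_forall_transGen progress ⟨hm₀, 0, h0m₀⟩
  have hgs : ∀ n, SBisimD T2 T3 (g n) s3
    | 0 => hm₀
    | n + 1 => (hg n).1.2
  obtain ⟨z, hz, n, hnz⟩ := isDivPres_sBisimD.1 g s3 (fun n => (hg n).1.1) hgs
  obtain ⟨y, hny, -, i, hiy⟩ := (hg n).2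
  obtain ⟨z', hzz', hyz'⟩ :=
    isBranchingBisim_sBisimD.exists_tauStar hnz
      (Relation.ReflTransGen.mono (fun _ _ => And.left) _ _ hny)
  exact hstuck ⟨z', hz.trans_left hzz', i, y, hiy, hyz'⟩

theorem SBisimD.trans {s1 : T1.S} {s2 : T2.S} {s3 : T3.S} (h12 : SBisimD T1 T2 s1 s2)
    (h23 : SBisimD T2 T3 s2 s3) : SBisimD T1 T3 s1 s3 := by
  refine ⟨Relation.Comp (SBisimD T1 T2) (SBisimD T2 T3), fun p q hpq => ⟨?_, ?_⟩,
    ⟨fun f q hf h => sBisimD_comp_divPres hf h, fun p g hg h => ?_⟩, s2, h12, h23⟩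
  · obtain ⟨m, hpm, hmq⟩ := hpq
    exact fun a p' hp => sBisimD_comp_forth hpm hmq hp
  · obtain ⟨m, hpm, hmq⟩ := hpq
    intro a q' hq
    obtain ⟨p'', p', h1, h2, h3, h4⟩ := sBisimD_comp_forth hmq.symm hpm.symm hq
    exact ⟨p'', p', h1, h2, h3.sBisimD_symm, h4.sBisimD_symm⟩
  · obtain ⟨p', hpp', i, hi⟩ := sBisimD_comp_divPres hg fun i => (h i).sBisimD_symm
    exact ⟨p', hpp', i, hi.sBisimD_symm⟩

theorem eqClassD_eq {s t : T.S} (h : SBisimD T T s t) : eqClassD T s = eqClassD T t :=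
  Set.ext fun _ => ⟨h.symm.trans, h.trans⟩

end Bisim

section Stuttering

variable {A : Type u} {T : LTS.{u, v} A}

def stutterRel (T : LTS.{u, v} A) (t w p q : T.S) : Prop :=
  SBisimD T T p q ∨ (T.TauStar t p ∧ T.TauStar p w ∧ SBisimD T T t q)

theorem isBranchingBisim_stutterRel {t w : T.S} (htw : SBisimD T T t w) :
    IsBranchingBisim T T (stutterRel T t w) := by
  rintro p q hpq
  refine ⟨fun a p' hp => ?_, fun a q' hq => ?_⟩
  · obtain hpq | ⟨htp, -, htq⟩ := hpq
    · obtain ⟨q'', q', h1, h2, h3, h4⟩ := (isBranchingBisim_sBisimD p q hpq).1 a p' hp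
      exact ⟨q'', q', h1, h2, .inl h3, .inl h4⟩
    obtain ⟨q₁, hqq₁, hpq₁⟩ := isBranchingBisim_sBisimD.exists_tauStar htq htp
    obtain ⟨q'', q', h1, h2, h3, h4⟩ := (isBranchingBisim_sBisimD p q₁ hpq₁).1 a p' hp
    exact ⟨q'', q', hqq₁.trans h1, h2, .inl h3, .inl h4⟩
  · obtain hpq | ⟨-, hpw, htq⟩ := hpq
    · obtain ⟨p'', p', h1, h2, h3, h4⟩ := (isBranchingBisim_sBisimD p q hpq).2 a q' hq
      exact ⟨p'', p', h1, h2, .inl h3, .inl h4⟩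
    obtain ⟨p'', p', h1, h2, h3, h4⟩ :=
      (isBranchingBisim_sBisimD w q (htw.symm.trans htq)).2 a q' hq
    exact ⟨p'', p', hpw.trans h1, h2, .inl h3, .inl h4⟩

theorem isDivPres_stutterRel {t w : T.S} (htw : SBisimD T T t w) :
    IsDivPres T T (stutterRel T t w) := by
  refine ⟨fun f q hf h => ?_, fun p g hg h => ?_⟩
  · by_cases hall : ∀ i, SBisimD T T (f i) q
    · obtain ⟨q', hqq', i, hi⟩ := isDivPres_sBisimD.1 f q hf hall
      exact ⟨q', hqq', i, .inl hi⟩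
    obtain ⟨i, hi⟩ := not_forall.mp hall
    obtain ⟨htf, -, htq⟩ := (h i).resolve_left hi
    obtain ⟨q', hqq', hfq'⟩ := isBranchingBisim_sBisimD.exists_tauStar htq htf
    rcases Relation.reflTransGen_iff_eq_or_transGen.mp hqq' with rfl | hqq'
    · exact absurd hfq' hi
    · exact ⟨q', hqq', i, .inl hfq'⟩
  · by_cases hall : ∀ i, SBisimD T T p (g i)
    · obtain ⟨p', hpp', i, hi⟩ := isDivPres_sBisimD.2 p g hg hall
      exact ⟨p', hpp', i, .inl hi⟩
    obtain ⟨i, hi⟩ := not_forall.mp hall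
    obtain ⟨-, hpw, htg⟩ := (h i).resolve_left hi
    rcases Relation.reflTransGen_iff_eq_or_transGen.mp hpw with rfl | hpw
    · exact absurd (htw.symm.trans htg) hi
    · exact ⟨w, hpw, i, .inl (htw.symm.trans htg)⟩

theorem SBisimD.of_tauStar_of_tauStar {t u w : T.S} (htu : T.TauStar t u) (huw : T.TauStar u w)
    (htw : SBisimD T T t w) : SBisimD T T t u :=
  SBisimD.symm ⟨stutterRel T t w, isBranchingBisim_stutterRel htw, isDivPres_stutterRel htw,
    .inr ⟨htu, huw, .refl t⟩⟩

end Stuttering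

section Degree

variable {A : Type u} {T : LTS.{u, v} A}

def NoInertTauStep (T : LTS.{u, v} A) (t : T.S) : Prop :=
  ∀ u, T.TauStep t u → ¬ SBisimD T T t u

theorem exists_sBisimD_noInertTauStep (hd : ¬ HasDivergenceD T) {s : T.S} (hs : T.Reachable s) :
    ∃ t, SBisimD T T s t ∧ NoInertTauStep T t := by
  by_contra! hinert
  have step : ∀ t, T.Reachable t ∧ SBisimD T T s t →
      ∃ u, (T.Reachable u ∧ SBisimD T T s u) ∧ T.TauStep t u := by
    rintro t ⟨ht, hst⟩
    obtain ⟨u, htu, htu'⟩ : ∃ u, T.TauStep t u ∧ SBisimD T T t u := by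
      simpa only [NoInertTauStep, not_forall, not_not, exists_prop] using hinert t hst
    exact ⟨u, ⟨ht.tail ⟨none, htu⟩, hst.trans htu'⟩, htu⟩
  obtain ⟨f, -, hf⟩ := exists_seq_of_forall_exists step ⟨hs, .refl s⟩
  exact hd ⟨f, fun i => (hf i).1.1, fun i => (hf i).2,
    fun i j => (hf i).1.2.symm.trans (hf j).1.2⟩

theorem NoInertTauStep.exists_step {s s' t : T.S} {a : Option A} (ht : NoInertTauStep T t)
    (hst : SBisimD T T s t) (hs : T.step s a s') (hinert : a = none → ¬ SBisimD T T s s') :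
    ∃ t', T.step t a t' ∧ SBisimD T T s' t' := by
  obtain ⟨t'', t', htt'', ht''t', hst'', hs't'⟩ := (isBranchingBisim_sBisimD s t hst).1 a s' hs
  obtain rfl : t = t'' := by
    rcases htt''.cases_head with h | ⟨u, htu, hut''⟩
    · exact h
    · exact absurd (SBisimD.of_tauStar_of_tauStar (.single htu) hut'' (hst.symm.trans hst''))
        (ht u htu)
  rcases ht''t' with htt' | ⟨rfl, rfl⟩
  · exact ⟨t', htt', hs't'⟩
  · exact absurd (hst''.trans hs't'.symm) (hinert rfl)

theorem degD_le_of_noInertTauStep {s t : T.S} (hst : SBisimD T T s t) (ht : NoInertTauStep T t) :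
    degD T s ≤ Cardinal.mk {q : Option A × T.S // T.step t q.1 q.2} := by
  let classOf : Option A × T.S → Option A × Set T.S := fun q => (q.1, eqClassD T q.2)
  calc degD T s ≤ Cardinal.mk (classOf '' {q | T.step t q.1 q.2}) := by
        refine Cardinal.mk_subtype_mono ?_
        rintro ⟨a, C⟩ ⟨s'', s', -, hs, hss'', hinert, rfl⟩
        obtain ⟨t', htt', hs't'⟩ := ht.exists_step (hss''.symm.trans hst) hs hinert
        exact ⟨(a, t'), htt', by rw [eqClassD_eq hs't']⟩
    _ ≤ _ := Cardinal.mk_image_le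

end Degree

theorem boundedBranchingUpToD_of_boundedBranching {A : Type u} (T : LTS.{u, v} A)
    (hb : T.BoundedBranching) (hd : ¬ HasDivergenceD T) :
    BoundedBranchingUpToD T := by
  obtain ⟨B, hB⟩ := hb
  refine ⟨B, fun s hs => ?_⟩
  obtain ⟨t, hst, ht⟩ := exists_sBisimD_noInertTauStep hd hs
  exact (degD_le_of_noInertTauStep hst ht).trans (hB t)
end
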